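/- arXiv:2104.05811 — 4 statements merged into one kernel-verified Lean document; each statement's English description precedes it below -/
import Mathlib

section
/- If H is a normal subgroup of G, C is a subgroup of G containing H, and C/H is contranormal in G/H, then C is contranormal in G. -/
/-- If `H` is normal in `G`, `H ≤ C`, and `C/H` is contranormal in `G/H`,
then `C` is contranormal in `G`. -/
theorem contranormal_of_quotient_contranormal {G : Type*} [Group G] (C H : Subgroup G)
    [H.Normal] (hHC : H ≤ C)
    (hq : Subgroup.normalClosure
      ((C.map (QuotientGroup.mk' H) : Subgroup (G ⧸ H)) : Set (G ⧸ H)) = ⊤) :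
    Subgroup.normalClosure (C : Set G) = ⊤ := by
  have hsurj : Function.Surjective (QuotientGroup.mk' H) := QuotientGroup.mk'_surjective H
  have hmap : (Subgroup.normalClosure (C : Set G)).map (QuotientGroup.mk' H) = ⊤ := by
    rw [Subgroup.map_normalClosure _ _ hsurj]
    rw [← Subgroup.coe_map, hq]
  have := Subgroup.comap_map_eq (QuotientGroup.mk' H) (Subgroup.normalClosure (C : Set G))
  rw [hmap, Subgroup.comap_top] at this
  rw [QuotientGroup.ker_mk'] at this
  have hH : H ≤ Subgroup.normalClosure (C : Set G) :=
    hHC.trans Subgroup.subset_normalClosure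
  rw [sup_eq_left.mpr hH] at this
  exact this.symm
end

section
/- Let G be a group and A a normal subgroup of G with an ascending (transfinite) series of G-invariant subgroups 1 = A_0 ≤ A_1 ≤ ... ≤ A_γ = A, continuous at limit ordinals, such that [G, A_{α+1}/A_α] = A_{α+1}/A_α for all α < γ. Then [G, A] = A. -/
/-! `[G, A] ≤ A` because `A` is normal. Conversely, every `A_α` lies in `[G, A]` by transfinite
induction: `A_{α+1} = [G, A_{α+1}] A_α ≤ [G, A]` since `A_{α+1} ≤ A`, and limit stages are unions. -/

theorem Ordinal.apply_le_of_isSuccLimit_eq_iSup {L : Type*} [CompleteLattice L]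
    {f : Ordinal → L} {x : L} {γ : Ordinal} (h0 : f 0 ≤ x)
    (hsucc : ∀ α < γ, f α ≤ x → f (α + 1) ≤ x)
    (hlim : ∀ α ≤ γ, Order.IsSuccLimit α → f α = ⨆ β < α, f β) :
    ∀ α ≤ γ, f α ≤ x := by
  intro α
  induction α using Ordinal.limitRecOn with
  | zero => exact fun _ => h0
  | add_one β ih =>
    intro hβγ
    have hβ : β < γ := (Order.lt_add_one_iff.mpr le_rfl).trans_le hβγ
    exact hsucc β hβ (ih hβ.le)
  | limit β hβ ih =>
    intro hβγ
    rw [hlim β hβγ hβ]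
    exact iSup₂_le fun δ hδ => ih δ hδ (hδ.le.trans hβγ)

theorem commutator_eq_self_of_series_general {G : Type*} [Group G] (A : Subgroup G) [A.Normal]
    (γ : Ordinal) (f : Ordinal → Subgroup G)
    (h0 : f 0 = ⊥) (hγ : f γ = A) (hmono : Monotone f)
    (hlim : ∀ α ≤ γ, Order.IsSuccLimit α → f α = ⨆ β < α, f β)
    (hstep : ∀ α < γ, ⁅(⊤ : Subgroup G), f (α + 1)⁆ ⊔ f α = f (α + 1)) :
    ⁅(⊤ : Subgroup G), A⁆ = A := by
  refine le_antisymm (Subgroup.commutator_le_right _ _) ?_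
  have hsucc : ∀ α < γ, f α ≤ ⁅⊤, A⁆ → f (α + 1) ≤ ⁅⊤, A⁆ := fun α hα ih => by
    have hA : f (α + 1) ≤ A := hγ ▸ hmono (Order.add_one_le_of_lt hα)
    rw [← hstep α hα]
    exact sup_le (Subgroup.commutator_mono le_rfl hA) ih
  exact hγ ▸ Ordinal.apply_le_of_isSuccLimit_eq_iSup (h0 ▸ bot_le) hsucc hlim γ le_rfl

/-- If a normal subgroup `A` of `G` has an ascending series of `G`-invariant subgroups
`1 = A₀ ≤ A₁ ≤ ⋯ ≤ A_γ = A`, continuous at limit ordinals, with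
`[G, A_{α+1}] A_α = A_{α+1}` for all `α < γ`, then `[G, A] = A`. -/
theorem commutator_eq_self_of_series {G : Type*} [Group G] (A : Subgroup G) [A.Normal]
    (γ : Ordinal) (f : Ordinal → Subgroup G)
    (h0 : f 0 = ⊥) (hγ : f γ = A) (hmono : Monotone f)
    (hnorm : ∀ α, (f α).Normal)
    (hlim : ∀ α ≤ γ, Order.IsSuccLimit α → f α = ⨆ β < α, f β)
    (hstep : ∀ α < γ, ⁅(⊤ : Subgroup G), f (α + 1)⁆ ⊔ f α = f (α + 1)) :
    ⁅(⊤ : Subgroup G), A⁆ = A :=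
  commutator_eq_self_of_series_general A γ f h0 hγ hmono hlim hstep
end

section
/- Let G be a group and A a G-hypereccentric normal subgroup of G. Then [A, G] = A. -/
/-- A normal subgroup `A` of `G` is `G`-hypereccentric if it has an ascending series of
`G`-invariant subgroups, continuous at limits, whose successive factors are `G`-eccentric
`G`-chief factors. -/
def IsGHypereccentric {G : Type*} [Group G] (A : Subgroup G) : Prop :=
  ∃ (γ : Ordinal.{0}) (f : Ordinal.{0} → Subgroup G),
    f 0 = ⊥ ∧ f γ = A ∧ Monotone f ∧ (∀ α, (f α).Normal) ∧
    (∀ α ≤ γ, Order.IsSuccLimit α → f α = ⨆ β < α, f β) ∧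
    (∀ α < γ,
      (∀ N : Subgroup G, N.Normal → f α ≤ N → N ≤ f (α + 1) → N = f α ∨ N = f (α + 1)) ∧
      ¬ ⁅(⊤ : Subgroup G), f (α + 1)⁆ ≤ f α)

/-!
Climb the series by transfinite induction, showing every term lies in `[A, G]`. At a successor
step `C_α ≤ C_{α+1}`, the normal subgroup `C_α [C_{α+1}, G]` lies between the two terms; it
cannot be `C_α` because the factor is eccentric, so by minimality of the chief factor it is
`C_{α+1}`, which is therefore contained in `C_α [A, G] ≤ [A, G]`. Limit steps are unions.
-/

theorem Ordinal.le_of_succ_le_of_limit {L : Type*} [CompleteLattice L] {f : Ordinal → L}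
    {γ : Ordinal} {P : L} (h0 : f 0 ≤ P) (hsucc : ∀ α < γ, f α ≤ P → f (α + 1) ≤ P)
    (hlim : ∀ α ≤ γ, Order.IsSuccLimit α → f α ≤ ⨆ β < α, f β) :
    ∀ α ≤ γ, f α ≤ P := by
  intro α
  induction α using Ordinal.limitRecOn with
  | zero => exact fun _ => h0
  | add_one β ih =>
    intro hβγ
    have hβ : β < γ := (lt_add_one β).trans_le hβγ
    exact hsucc β hβ (ih hβ.le)
  | limit α hα ih =>
    intro hαγ
    exact (hlim α hαγ hα).trans <|
      iSup₂_le fun β hβ => ih β hβ (hβ.le.trans hαγ)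

namespace Subgroup

variable {G : Type*} [Group G]

theorem sup_commutator_top_eq_of_chief_of_eccentric {M N : Subgroup G} [M.Normal] [N.Normal]
    (hMN : M ≤ N) (hchief : ∀ K : Subgroup G, K.Normal → M ≤ K → K ≤ N → K = M ∨ K = N)
    (hecc : ¬ ⁅(⊤ : Subgroup G), N⁆ ≤ M) :
    M ⊔ ⁅(⊤ : Subgroup G), N⁆ = N := by
  rcases hchief _ (sup_normal _ _) le_sup_left (sup_le hMN (commutator_le_right ⊤ N))
    with hM | hN
  · exact absurd (hM ▸ le_sup_right) hecc
  · exact hN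

end Subgroup

/-- If `A` is a `G`-hypereccentric normal subgroup of `G`, then `[A, G] = A`. -/
theorem commutator_eq_self_of_hypereccentric {G : Type*} [Group G] (A : Subgroup G)
    [A.Normal] (h : IsGHypereccentric A) :
    ⁅A, (⊤ : Subgroup G)⁆ = A := by
  obtain ⟨γ, f, h0, hγ, hmono, hnorm, hlim, hseries⟩ := h
  refine le_antisymm (Subgroup.commutator_le_left A ⊤) ?_
  have hsucc : ∀ α < γ, f α ≤ ⁅A, ⊤⁆ → f (α + 1) ≤ ⁅A, ⊤⁆ := by
    intro α hαγ ih
    have := hnorm α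
    have := hnorm (α + 1)
    have hα : α < α + 1 := lt_add_one α
    have hfA : f (α + 1) ≤ A := hγ ▸ hmono (Order.add_one_le_of_lt hαγ)
    obtain ⟨hchief, hecc⟩ := hseries α hαγ
    calc f (α + 1) = f α ⊔ ⁅⊤, f (α + 1)⁆ :=
          (Subgroup.sup_commutator_top_eq_of_chief_of_eccentric (hmono hα.le) hchief hecc).symm
      _ ≤ ⁅A, ⊤⁆ ⊔ ⁅⊤, A⁆ := sup_le_sup ih (Subgroup.commutator_mono le_rfl hfA)
      _ = ⁅A, ⊤⁆ := by rw [Subgroup.commutator_comm ⊤ A, sup_idem]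
  calc A = f γ := hγ.symm
    _ ≤ ⁅A, ⊤⁆ := Ordinal.le_of_succ_le_of_limit (h0 ▸ bot_le) hsucc
        (fun α hαγ hα => (hlim α hαγ hα).le) γ le_rfl
end

section
/- Let D be a divisible abelian 2-group with the inversion automorphism α, and let G = D ⋊ ⟨α⟩. Then the subgroup ⟨α⟩ is a proper contranormal subgroup of G, and G is hypercentral. -/
/-- A group is hypercentral if it admits a transfinite ascending central series from `⊥`
to `⊤`, continuous at limit ordinals (equivalently, the transfinite upper central series
reaches the whole group). -/
def IsHypercentral (G : Type*) [Group G] : Prop :=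
  ∃ (γ : Ordinal.{0}) (f : Ordinal.{0} → Subgroup G),
    f 0 = ⊥ ∧ f γ = ⊤ ∧ Monotone f ∧
    (∀ α < γ, ∀ x ∈ f (α + 1), ∀ g : G, x * g * x⁻¹ * g⁻¹ ∈ f α) ∧
    (∀ α ≤ γ, Order.IsSuccLimit α → f α = ⨆ β < α, f β)

/-!
Write `G = D ⋊ ⟨α⟩`. Every commutator of `G` lies in `D`, and the commutator of `d ∈ D`
with `α` is `d²`. Since `D` is divisible, every element of `D` is such a commutator, so the
normal closure of `⟨α⟩` contains `D` and hence all of `G`, while `⟨α⟩ ∩ D = 1` keeps `⟨α⟩`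
proper. Since `⟨α⟩` acts on `D` by `±1`, commutation with any element of `G` maps
`{d | d ^ 2 ^ (n + 1) = 1}` into `{d | d ^ 2 ^ n = 1}`, so each `{d | d ^ 2 ^ n = 1}` lies in
the `n`-th term of the upper central series. As `D` is a 2-group, the `ω`-th term therefore contains
`D ⊇ [G, G]`, and one more step reaches `G`.
-/

open scoped commutatorElement

namespace SemidirectProduct

variable {N G : Type*} [Group G]

theorem range_inr_ne_top [Group N] [Nontrivial N] {φ : G →* MulAut N} :
    (inr : G →* N ⋊[φ] G).range ≠ ⊤ := by
  obtain ⟨d, hd⟩ := exists_ne (1 : N)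
  intro htop
  obtain ⟨g, hg⟩ : inl d ∈ (inr : G →* N ⋊[φ] G).range := htop ▸ Subgroup.mem_top _
  exact hd (by simpa using congrArg left hg.symm)

theorem commutator_le_range_inl [Group N] [IsMulCommutative G] {φ : G →* MulAut N} :
    commutator (N ⋊[φ] G) ≤ (inl : N →* N ⋊[φ] G).range := by
  rw [range_inl_eq_ker_rightHom, commutator_eq_closure, Subgroup.closure_le]
  rintro _ ⟨x, y, rfl⟩
  simpa [commutatorElement_eq_one_iff_commute, Commute, SemiconjBy] using
    IsMulCommutative.is_comm.comm x.right y.right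

variable [CommGroup N] {φ : G →* MulAut N}

theorem commutatorElement_inl (d : N) (x : N ⋊[φ] G) :
    ⁅(inl d : N ⋊[φ] G), x⁆ = inl (d * φ x.right d⁻¹) := by
  ext
  · simp only [commutatorElement_def, mul_left, inv_left, left_inl, right_inl, mul_right,
      inv_right, map_one, map_inv, MulAut.one_apply, mul_one, one_mul, inv_one,
      MulAut.apply_inv_self]
    rw [mul_right_comm, mul_inv_cancel_right]
  · simp [commutatorElement_def]

theorem normalClosure_range_inr_eq_top (h : ∀ d : N, ∃ e : N, ∃ g : G, e * φ g e⁻¹ = d) :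
    Subgroup.normalClosure ((inr : G →* N ⋊[φ] G).range : Set (N ⋊[φ] G)) = ⊤ := by
  set K := Subgroup.normalClosure ((inr : G →* N ⋊[φ] G).range : Set (N ⋊[φ] G))
  have hK : K.Normal := Subgroup.normalClosure_normal
  have inr_mem (g : G) : inr g ∈ K := Subgroup.subset_normalClosure ⟨g, rfl⟩
  refine eq_top_iff.2 fun x _ => ?_
  rw [← inl_left_mul_inr_right x]
  refine mul_mem ?_ (inr_mem x.right)
  obtain ⟨e, g, he⟩ := h x.left
  have hcomm : inl (e * φ g e⁻¹) = ⁅(inl e : N ⋊[φ] G), (inr g : N ⋊[φ] G)⁆ := by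
    rw [commutatorElement_inl, right_inr]
  rw [← he, hcomm, commutatorElement_def]
  exact mul_mem (hK.conj_mem _ (inr_mem g) _) (inv_mem (inr_mem g))

theorem inl_mem_upperCentralSeries (hφ : ∀ g d, φ g d = d ∨ φ g d = d⁻¹) {n : ℕ} {d : N}
    (hd : d ^ 2 ^ n = 1) : inl d ∈ Subgroup.upperCentralSeries (N ⋊[φ] G) n := by
  induction n generalizing d with
  | zero => simp_all
  | succ n ih =>
    refine Subgroup.mem_upperCentralSeries_succ_iff.2 fun x => ?_
    rw [commutatorElement_inl]
    rcases hφ x.right d⁻¹ with h | h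
    · rw [h, mul_inv_cancel, map_one]
      exact one_mem _
    · rw [h, inv_inv]
      exact ih (by rwa [← sq, ← pow_mul, ← pow_succ'])

end SemidirectProduct

theorem MulAut.apply_eq_self_or_inv_of_mem_zpowers {D : Type*} [CommGroup D] {α : MulAut D}
    (hα : ∀ d, α d = d⁻¹) {t : MulAut D} (ht : t ∈ Subgroup.zpowers α) (d : D) :
    t d = d ∨ t d = d⁻¹ := by
  obtain ⟨m, rfl⟩ := Subgroup.mem_zpowers_iff.1 ht
  have hsq : α ^ 2 = 1 := by
    ext
    simp [sq, hα]
  rw [zpow_eq_zpow_emod' m hsq]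
  rcases Int.emod_two_eq_zero_or_one m with h | h <;> simp [h, hα]

section

open Ordinal

variable (G : Type*) [Group G]

/-- The upper central series continued to `ω` by unions and set to `⊤` beyond `ω`: a central
series exactly when the `ω`-th term contains `[G, G]`. -/
noncomputable def upperCentralSeriesThenTop (o : Ordinal.{0}) : Subgroup G :=
  if o ≤ ω then ⨆ (n : ℕ) (_ : (n : Ordinal) ≤ o), Subgroup.upperCentralSeries G n else ⊤

variable {G}

theorem upperCentralSeriesThenTop_natCast (n : ℕ) :
    upperCentralSeriesThenTop G n = Subgroup.upperCentralSeries G n := by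
  rw [upperCentralSeriesThenTop, if_pos (natCast_lt_omega0 n).le]
  exact le_antisymm (iSup₂_le fun m hm => Subgroup.upperCentralSeries_mono G (mod_cast hm))
    (le_iSup₂_of_le n le_rfl le_rfl)

theorem upperCentralSeriesThenTop_omega0 :
    upperCentralSeriesThenTop G ω = ⨆ n : ℕ, Subgroup.upperCentralSeries G n := by
  simp [upperCentralSeriesThenTop, (natCast_lt_omega0 _).le]

theorem upperCentralSeriesThenTop_of_omega0_lt {o : Ordinal.{0}} (ho : ω < o) :
    upperCentralSeriesThenTop G o = ⊤ :=
  if_neg (not_le.2 ho)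

theorem upperCentralSeriesThenTop_monotone : Monotone (upperCentralSeriesThenTop G) := by
  intro a b hab
  by_cases hb : b ≤ ω
  · rw [upperCentralSeriesThenTop, upperCentralSeriesThenTop, if_pos (hab.trans hb), if_pos hb]
    exact iSup₂_mono' fun n hn => ⟨n, hn.trans hab, le_rfl⟩
  · rw [upperCentralSeriesThenTop_of_omega0_lt (not_le.1 hb)]
    exact le_top

theorem isHypercentral_of_commutator_le_iSup_upperCentralSeries
    (h : commutator G ≤ ⨆ n : ℕ, Subgroup.upperCentralSeries G n) : IsHypercentral G := by
  refine ⟨ω + 1, upperCentralSeriesThenTop G, ?_, ?_, upperCentralSeriesThenTop_monotone, ?_, ?_⟩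
  · simpa using upperCentralSeriesThenTop_natCast (G := G) 0
  · exact upperCentralSeriesThenTop_of_omega0_lt (lt_add_one ω)
  · intro o ho x hx g
    rw [← commutatorElement_def]
    rcases (Order.lt_add_one_iff.1 ho).lt_or_eq with ho | rfl
    · obtain ⟨n, rfl⟩ := lt_omega0.1 ho
      rw [← Nat.cast_succ, upperCentralSeriesThenTop_natCast] at hx
      rw [upperCentralSeriesThenTop_natCast]
      exact Subgroup.mem_upperCentralSeries_succ_iff.1 hx g
    · rw [upperCentralSeriesThenTop_omega0]
      exact h (Subgroup.commutator_mem_commutator (Subgroup.mem_top x) (Subgroup.mem_top g))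
  · intro o ho hlim
    obtain rfl : o = ω := by
      refine le_antisymm ?_ (omega0_le_of_isSuccLimit hlim)
      rcases ho.lt_or_eq with ho | rfl
      · exact Order.lt_add_one_iff.1 ho
      · exact (Order.not_isSuccLimit_succ ω (by rwa [Order.succ_eq_add_one])).elim
    rw [upperCentralSeriesThenTop_omega0]
    refine le_antisymm (iSup_le fun n => ?_) (iSup₂_le fun o ho => ?_)
    · exact le_iSup₂_of_le (n : Ordinal) (natCast_lt_omega0 n)
        (upperCentralSeriesThenTop_natCast n).ge
    · obtain ⟨n, rfl⟩ := lt_omega0.1 ho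
      rw [upperCentralSeriesThenTop_natCast]
      exact le_iSup _ n

end

/-- Let `D` be a nontrivial divisible abelian 2-group, `α` its inversion automorphism and
`G = D ⋊ ⟨α⟩`. Then `⟨α⟩` is a proper contranormal subgroup of `G`, and `G` is
hypercentral. -/
theorem inversion_contranormal_and_hypercentral {D : Type*} [CommGroup D] [Nontrivial D]
    (h2 : ∀ d : D, ∃ n : ℕ, d ^ (2 ^ n) = 1)
    (hdiv : ∀ d : D, ∃ e : D, e * e = d)
    (α : MulAut D) (hα : ∀ d : D, α d = d⁻¹) :
    ((SemidirectProduct.inr :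
        (Subgroup.zpowers α) →* D ⋊[(Subgroup.zpowers α).subtype] (Subgroup.zpowers α)).range ≠ ⊤ ∧
      Subgroup.normalClosure
        ((SemidirectProduct.inr :
            (Subgroup.zpowers α) →* D ⋊[(Subgroup.zpowers α).subtype] (Subgroup.zpowers α)).range :
          Set (D ⋊[(Subgroup.zpowers α).subtype] (Subgroup.zpowers α))) = ⊤) ∧
    IsHypercentral (D ⋊[(Subgroup.zpowers α).subtype] (Subgroup.zpowers α)) := by
  refine ⟨⟨SemidirectProduct.range_inr_ne_top,
    SemidirectProduct.normalClosure_range_inr_eq_top fun d => ?_⟩,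
    isHypercentral_of_commutator_le_iSup_upperCentralSeries ?_⟩
  · obtain ⟨e, rfl⟩ := hdiv d
    exact ⟨e, ⟨α, Subgroup.mem_zpowers α⟩, by simp [hα]⟩
  · refine SemidirectProduct.commutator_le_range_inl.trans ?_
    rintro _ ⟨d, rfl⟩
    obtain ⟨n, hn⟩ := h2 d
    exact Subgroup.mem_iSup_of_mem n (SemidirectProduct.inl_mem_upperCentralSeries
      (fun t => MulAut.apply_eq_self_or_inv_of_mem_zpowers hα t.2) hn)
end
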